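/- Assume t = 1 and n ≥ 2, and let A, A' be one-dimensional (automatically isotropic) subspaces of V. Then the pair (A,A') is good if and only if A = A' or A' ∩ A^⊥ = 0; equivalently, (A,A') is not good exactly when A ≠ A' and A' ⊆ A^⊥. -/

import Mathlib

open Module Submodule

variable {k V : Type*} [Field k] [AddCommGroup V] [Module k V]

/-- The orthogonal `A^⊥ = {x ∈ V : ⟨x,a⟩ = 0 ∀ a ∈ A}` of a subspace `A` of `V` with
respect to a bilinear form `B` on `V`. -/
def perp (B : V →ₗ[k] V →ₗ[k] k) (A : Submodule k V) : Submodule k V where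
  carrier := {x | ∀ a ∈ A, B x a = 0}
  add_mem' := fun {x y} hx hy a ha => by
    simp [map_add, LinearMap.add_apply, hx a ha, hy a ha]
  zero_mem' := fun a ha => by simp
  smul_mem' := fun c x hx a ha => by
    simp [map_smul, LinearMap.smul_apply, hx a ha]

/-- The pair `(A,A')` of isotropic subspaces is *good* if there is a subspace `L` with
`A^⊥ = L ⊕ A` and `A'^⊥ = L ⊕ A'` (internal direct sums). -/
def IsGood (B : V →ₗ[k] V →ₗ[k] k) (A A' : Submodule k V) : Prop :=
  ∃ L : Submodule k V,
    (Disjoint L A ∧ L ⊔ A = perp B A) ∧ (Disjoint L A' ∧ L ⊔ A' = perp B A')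

/-!
If `A' ⊆ A^⊥` and a common complement `L` exists, then `A ⊆ A'^⊥ = L ⊕ A'`
forces `A^⊥ = L ⊕ A ⊆ A'^⊥`, and symmetrically, so `A^⊥ = A'^⊥` and hence `A = A'`.
Conversely, if `A = A'` any complement of `A` in `A^⊥` will do, and if `A' ∩ A^⊥ = 0` then
`L = (A + A')^⊥` works: it meets both lines trivially and has codimension one in each of
`A^⊥` and `A'^⊥`.
-/

section

variable {B : V →ₗ[k] V →ₗ[k] k} {A A' : Submodule k V}

lemma mem_perp {x : V} : x ∈ perp B A ↔ ∀ a ∈ A, B x a = 0 := Iff.rfl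

lemma perp_sup : perp B (A ⊔ A') = perp B A ⊓ perp B A' := by
  ext x
  simp only [mem_perp, mem_inf]
  refine ⟨fun h => ⟨fun a ha => h a (mem_sup_left ha), fun a ha => h a (mem_sup_right ha)⟩, ?_⟩
  rintro ⟨h, h'⟩ _ hb
  obtain ⟨a, ha, a', ha', rfl⟩ := mem_sup.mp hb
  simp [h a ha, h' a' ha']

lemma le_perp_comm (hB : B.IsRefl) : A ≤ perp B A' ↔ A' ≤ perp B A :=
  ⟨fun h _ ha' _ ha => hB _ _ (h ha _ ha'), fun h _ ha _ ha' => hB _ _ (h ha' _ ha)⟩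

lemma perp_eq_orthogonal (hB : B.IsRefl) : perp B A = LinearMap.BilinForm.orthogonal B A := by
  ext x
  exact forall₂_congr fun a _ => ⟨hB x a, hB a x⟩

lemma le_perp_self_of_finrank_eq_one (hB : B.IsAlt) (hA : finrank k A = 1) : A ≤ perp B A := by
  obtain ⟨v, -, hv⟩ := finrank_eq_one_iff'.mp hA
  intro x hx a ha
  obtain ⟨c, hc⟩ := hv ⟨x, hx⟩
  obtain ⟨d, hd⟩ := hv ⟨a, ha⟩
  have hx' : c • (v : V) = x := congrArg Subtype.val hc
  have ha' : d • (v : V) = a := congrArg Subtype.val hd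
  simp [← hx', ← ha', hB v]

lemma isGood_self (hA : A ≤ perp B A) : IsGood B A A := by
  obtain ⟨L, hdisj, hsup⟩ := IsModularLattice.exists_disjoint_and_sup_eq hA
  have hL : Disjoint L A ∧ L ⊔ A = perp B A := ⟨hdisj.symm, sup_comm A L ▸ hsup⟩
  exact ⟨L, hL, hL⟩

lemma IsGood.perp_eq (h : IsGood B A A') (hA : A ≤ perp B A') (hA' : A' ≤ perp B A) :
    perp B A = perp B A' := by
  obtain ⟨L, ⟨-, hL⟩, ⟨-, hL'⟩⟩ := h
  exact le_antisymm (hL ▸ sup_le (hL' ▸ le_sup_left) hA) (hL' ▸ sup_le (hL ▸ le_sup_left) hA')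

variable [FiniteDimensional k V]

lemma finrank_add_finrank_perp (hB : B.IsRefl) (hB' : B.Nondegenerate) (S : Submodule k V) :
    finrank k S + finrank k (perp B S) = finrank k V := by
  rw [perp_eq_orthogonal hB, LinearMap.BilinForm.finrank_orthogonal hB']
  have := S.finrank_le
  omega

lemma perp_perp (hB : B.IsRefl) (hB' : B.Nondegenerate) (S : Submodule k V) :
    perp B (perp B S) = S := by
  rw [perp_eq_orthogonal hB, perp_eq_orthogonal hB,
    LinearMap.BilinForm.orthogonal_orthogonal hB' hB]

lemma finrank_le_of_disjoint_perp (hB : B.IsRefl) (hB' : B.Nondegenerate)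
    (h : Disjoint A' (perp B A)) : finrank k A' ≤ finrank k A := by
  have hsum := finrank_sup_add_finrank_inf_eq A' (perp B A)
  rw [h.eq_bot, finrank_bot] at hsum
  have := finrank_add_finrank_perp hB hB' A
  have := (A' ⊔ perp B A).finrank_le
  omega

lemma perp_inf_perp_sup_eq (hB : B.IsRefl) (hB' : B.Nondegenerate)
    (hA : A ≤ perp B A) (hA' : A' ≤ perp B A')
    (hdisj : Disjoint A (perp B A')) (hdisj' : Disjoint A' (perp B A)) :
    perp B A ⊓ perp B A' ⊔ A = perp B A := by
  have hsumAA' := finrank_sup_add_finrank_inf_eq A A'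
  rw [(hdisj.mono_right hA').eq_bot, finrank_bot] at hsumAA'
  have hsumL := finrank_sup_add_finrank_inf_eq (perp B A ⊓ perp B A') A
  rw [(hdisj.symm.mono_left inf_le_right).eq_bot, finrank_bot] at hsumL
  have hL := finrank_add_finrank_perp hB hB' (A ⊔ A')
  rw [perp_sup] at hL
  have := finrank_add_finrank_perp hB hB' A
  have := finrank_le_of_disjoint_perp hB hB' hdisj'
  exact eq_of_le_of_finrank_le (sup_le inf_le_left hA) (by omega)

lemma isGood_of_disjoint_perp (hB : B.IsRefl) (hB' : B.Nondegenerate)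
    (hA : A ≤ perp B A) (hA' : A' ≤ perp B A')
    (hdisj : Disjoint A (perp B A')) (hdisj' : Disjoint A' (perp B A)) : IsGood B A A' :=
  ⟨perp B A ⊓ perp B A',
    ⟨hdisj.symm.mono_left inf_le_right, perp_inf_perp_sup_eq hB hB' hA hA' hdisj hdisj'⟩,
    ⟨hdisj'.symm.mono_left inf_le_left,
      inf_comm (perp B A) _ ▸ perp_inf_perp_sup_eq hB hB' hA' hA hdisj' hdisj⟩⟩

lemma isGood_iff_of_finrank_eq_one (hB : B.IsAlt) (hB' : B.Nondegenerate)
    (hA : finrank k A = 1) (hA' : finrank k A' = 1) :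
    IsGood B A A' ↔ A = A' ∨ ¬ A' ≤ perp B A := by
  have hAtom := isAtom_iff_finrank_eq_one.mpr hA
  have hAtom' := isAtom_iff_finrank_eq_one.mpr hA'
  constructor
  · intro h
    rw [or_iff_not_imp_right, not_not]
    intro hle
    have := h.perp_eq ((le_perp_comm hB.isRefl).mpr hle) hle
    rw [← perp_perp hB.isRefl hB' A, ← perp_perp hB.isRefl hB' A', this]
  · rintro (rfl | hnle)
    · exact isGood_self (le_perp_self_of_finrank_eq_one hB hA)
    · exact isGood_of_disjoint_perp hB.isRefl hB'
        (le_perp_self_of_finrank_eq_one hB hA) (le_perp_self_of_finrank_eq_one hB hA')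
        (hAtom.not_le_iff_disjoint.mp (mt (le_perp_comm hB.isRefl).mp hnle))
        (hAtom'.not_le_iff_disjoint.mp hnle)

end

theorem stmt12_general [FiniteDimensional k V]
    (B : V →ₗ[k] V →ₗ[k] k)
    (halt : ∀ x : V, B x x = 0)
    (hnd : ∀ x : V, (∀ y : V, B x y = 0) → x = 0)
    (A A' : Submodule k V)
    (hdA : finrank k A = 1) (hdA' : finrank k A' = 1) :
    (IsGood B A A' ↔ (A = A' ∨ A' ⊓ perp B A = ⊥)) ∧
    (¬ IsGood B A A' ↔ (A ≠ A' ∧ A' ≤ perp B A)) := by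
  have hB : B.IsAlt := halt
  have hB' : B.Nondegenerate := hB.isRefl.nondegenerate_iff_separatingLeft.mpr hnd
  rw [isGood_iff_of_finrank_eq_one hB hB' hdA hdA', ← disjoint_iff,
    ← (isAtom_iff_finrank_eq_one.mpr hdA').not_le_iff_disjoint]
  tauto

/-- Let `V` be a `2n`-dimensional symplectic vector space over `k` with
`n ≥ 2`, and let `A, A'` be one-dimensional (automatically isotropic) subspaces of `V`.
Then `(A,A')` is good iff `A = A'` or `A' ∩ A^⊥ = 0`; equivalently, `(A,A')` is not good
exactly when `A ≠ A'` and `A' ⊆ A^⊥`. -/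
theorem stmt12 [FiniteDimensional k V] (n : ℕ) (hn : 2 ≤ n)
    (B : V →ₗ[k] V →ₗ[k] k)
    (hdim : finrank k V = 2 * n)
    (halt : ∀ x : V, B x x = 0)
    (hnd : ∀ x : V, (∀ y : V, B x y = 0) → x = 0)
    (A A' : Submodule k V)
    (hdA : finrank k A = 1) (hdA' : finrank k A' = 1) :
    (IsGood B A A' ↔ (A = A' ∨ A' ⊓ perp B A = ⊥)) ∧
    (¬ IsGood B A A' ↔ (A ≠ A' ∧ A' ≤ perp B A)) :=
  stmt12_general B halt hnd A A' hdA hdA'
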